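/- arXiv:1708.03084 — 3 statements merged into one kernel-verified Lean document; each statement's English description precedes it below -/
import Mathlib

section
/- Let E be a finite-dimensional real inner product space, B a convex subset of E contained in a polyhedron ∩_{i=1}^k {x ∈ E : ⟨y_i, x⟩ ≤ b_i}, where y_i ∈ E and b_i ∈ ℝ. If x₁, x₂ belong to the relative interior of B, then for every i ∈ {1,...,k}, ⟨y_i, x₁⟩ = b_i if and only if ⟨y_i, x₂⟩ = b_i. -/
/-!
An affine function that attains its maximum over `B` at a relative interior point `x` is constant
on `B`: otherwise, for `z ∈ B` with a smaller value, the line from `z` through `x` stays in `B` a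
little beyond `x`, where the function exceeds its value at `x`.
-/

open InnerProductSpace Filter Topology

section IntrinsicInterior

variable {E : Type*} [AddCommGroup E] [Module ℝ E] [TopologicalSpace E]
  [IsTopologicalAddGroup E] [ContinuousSMul ℝ E] {B : Set E} {x z : E}

theorem exists_one_lt_lineMap_mem_of_mem_intrinsicInterior (hx : x ∈ intrinsicInterior ℝ B)
    (hz : z ∈ affineSpan ℝ B) : ∃ t : ℝ, 1 < t ∧ AffineMap.lineMap z x t ∈ B := by
  obtain ⟨p, hp, rfl⟩ := mem_intrinsicInterior.1 hx
  let line : ℝ → affineSpan ℝ B := fun t =>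
    ⟨AffineMap.lineMap z p t, AffineMap.lineMap_mem t hz p.2⟩
  have hline : Continuous line :=
    (continuous_const.lineMap continuous_const continuous_id).subtype_mk _
  have hnhds : ∀ᶠ t in 𝓝 (1 : ℝ), line t ∈ interior ((↑) ⁻¹' B : Set (affineSpan ℝ B)) :=
    hline.continuousAt.preimage_mem_nhds <| by
      simpa [line, AffineMap.lineMap_apply_one] using isOpen_interior.mem_nhds hp
  obtain ⟨t, ht, ht1⟩ :=
    ((hnhds.filter_mono (nhdsWithin_le_nhds (s := Set.Ioi 1))).and self_mem_nhdsWithin).exists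
  exact ⟨t, ht1, interior_subset (s := ((↑) ⁻¹' B : Set (affineSpan ℝ B))) ht⟩

theorem AffineMap.eq_of_isMaxOn_of_mem_intrinsicInterior (f : E →ᵃ[ℝ] ℝ) (hf : IsMaxOn f B x)
    (hx : x ∈ intrinsicInterior ℝ B) (hz : z ∈ B) : f z = f x := by
  by_contra hne
  have hlt : f z < f x := (hf hz).lt_of_ne hne
  obtain ⟨t, ht, htB⟩ :=
    exists_one_lt_lineMap_mem_of_mem_intrinsicInterior hx (subset_affineSpan ℝ B hz)
  have hle : f (AffineMap.lineMap z x t) ≤ f x := hf htB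
  rw [AffineMap.apply_lineMap, AffineMap.lineMap_apply_ring'] at hle
  nlinarith

end IntrinsicInterior

theorem stmt_0_general {E : Type*} [NormedAddCommGroup E] [InnerProductSpace ℝ E]
    {k : ℕ} (y : Fin k → E) (b : Fin k → ℝ)
    (B : Set E)
    (hsub : B ⊆ ⋂ i : Fin k, {x : E | ⟪y i, x⟫_ℝ ≤ b i})
    {x₁ x₂ : E} (h₁ : x₁ ∈ intrinsicInterior ℝ B) (h₂ : x₂ ∈ intrinsicInterior ℝ B)
    (i : Fin k) : ⟪y i, x₁⟫_ℝ = b i ↔ ⟪y i, x₂⟫_ℝ = b i := by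
  let f : E →ᵃ[ℝ] ℝ := (innerₛₗ ℝ (y i)).toAffineMap
  have hf : ∀ x ∈ B, f x ≤ b i := fun x hx => Set.mem_iInter.1 (hsub hx) i
  have face : ∀ {u v : E}, u ∈ intrinsicInterior ℝ B → v ∈ intrinsicInterior ℝ B →
      f u = b i → f v = b i := fun hu hv hfu =>
    hfu ▸ f.eq_of_isMaxOn_of_mem_intrinsicInterior (fun x hx => hfu ▸ hf x hx) hu
      (intrinsicInterior_subset hv)
  exact ⟨face h₁ h₂, face h₂ h₁⟩

theorem stmt_0 {E : Type*} [NormedAddCommGroup E] [InnerProductSpace ℝ E]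
    [FiniteDimensional ℝ E] {k : ℕ} (y : Fin k → E) (b : Fin k → ℝ)
    (B : Set E) (hB : Convex ℝ B)
    (hsub : B ⊆ ⋂ i : Fin k, {x : E | ⟪y i, x⟫_ℝ ≤ b i})
    {x₁ x₂ : E} (h₁ : x₁ ∈ intrinsicInterior ℝ B) (h₂ : x₂ ∈ intrinsicInterior ℝ B)
    (i : Fin k) : ⟪y i, x₁⟫_ℝ = b i ↔ ⟪y i, x₂⟫_ℝ = b i :=
  stmt_0_general y b B hsub h₁ h₂ i
end

section
/- Let x, y : ℝ → E be two T-periodic solutions of the sweeping process -x'(t) ∈ N_{C(t)}(x(t)) with C(t) nonempty closed convex and Lipschitz in t (in the Hausdorff metric). Then the distance ‖x(t) - y(t)‖ is constant in t. -/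
/-! Along two solutions of a sweeping process, monotonicity of the normal cone gives
`d/dt ‖x - y‖² = 2 ⟪x' - y', x - y⟫ ≤ 0` almost everywhere; `‖x - y‖²` is locally Lipschitz,
hence absolutely continuous, so it is nonincreasing. A nonincreasing periodic function is
constant. -/

open MeasureTheory InnerProductSpace

/-- The normal cone of convex analysis: empty outside `C`. -/
def normalCone {E : Type*} [NormedAddCommGroup E] [InnerProductSpace ℝ E]
    (C : Set E) (x : E) : Set E :=
  {ζ | x ∈ C ∧ ∀ c ∈ C, ⟪ζ, c - x⟫_ℝ ≤ 0}

/-- A solution of the sweeping process `-x'(t) ∈ N_{C(t)}(x(t))`: a Lipschitz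
function satisfying the differential inclusion a.e. -/
def IsSweepingSolution {E : Type*} [NormedAddCommGroup E] [InnerProductSpace ℝ E]
    (C : ℝ → Set E) (x : ℝ → E) : Prop :=
  (∃ K : NNReal, LipschitzWith K x) ∧ (∀ t, x t ∈ C t) ∧
    ∀ᵐ t ∂(volume : Measure ℝ), ∃ v : E, HasDerivAt x v t ∧ -v ∈ normalCone (C t) (x t)

open Set

lemma inner_sub_sub_nonneg_of_mem_normalCone {E : Type*} [NormedAddCommGroup E]
    [InnerProductSpace ℝ E] {C : Set E} {x y ζ ξ : E}
    (hζ : ζ ∈ normalCone C x) (hξ : ξ ∈ normalCone C y) :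
    0 ≤ ⟪ζ - ξ, x - y⟫_ℝ := by
  have hx := hζ.2 y hξ.1
  have hy := hξ.2 x hζ.1
  rw [← neg_sub x y, inner_neg_right] at hx
  rw [inner_sub_left]
  linarith

lemma LocallyLipschitz.antitone_of_ae_deriv_nonpos {f : ℝ → ℝ} (hf : LocallyLipschitz f)
    (hd : ∀ᵐ t, deriv f t ≤ 0) : Antitone f := by
  intro a b hab
  obtain ⟨K, hK⟩ :=
    (hf.locallyLipschitzOn (s := uIcc a b)).exists_lipschitzOnWith_of_compact isCompact_uIcc
  have hftc := hK.absolutelyContinuousOnInterval.integral_deriv_eq_sub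
  have hint : ∫ t in a..b, deriv f t ≤ 0 := by
    rw [intervalIntegral.integral_of_le hab]
    exact integral_nonpos_of_ae (ae_restrict_of_ae hd)
  linarith

lemma Function.Periodic.eq_of_antitone {f : ℝ → ℝ} {T : ℝ} (hf : Function.Periodic f T)
    (hT : 0 < T) (hanti : Antitone f) (s t : ℝ) : f s = f t := by
  have hle : ∀ s t, f s ≤ f t := fun s t => by
    obtain ⟨n, hn⟩ := Archimedean.arch (t - s) hT
    rw [← hf.nat_mul n s]
    exact hanti (by rw [nsmul_eq_mul] at hn; linarith)
  exact le_antisymm (hle s t) (hle t s)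

namespace IsSweepingSolution

variable {E : Type*} [NormedAddCommGroup E] [InnerProductSpace ℝ E]
  {C : ℝ → Set E} {x y : ℝ → E}

lemma ae_deriv_norm_sub_sq_nonpos (hx : IsSweepingSolution C x) (hy : IsSweepingSolution C y) :
    ∀ᵐ t, deriv (fun t => ‖x t - y t‖ ^ 2) t ≤ 0 := by
  filter_upwards [hx.2.2, hy.2.2] with t ⟨u, hu, hun⟩ ⟨v, hv, hvn⟩
  rw [(hu.fun_sub hv).norm_sq.deriv]
  have hmono := inner_sub_sub_nonneg_of_mem_normalCone hun hvn
  rw [neg_sub_neg, ← neg_sub u v, inner_neg_left, real_inner_comm] at hmono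
  linarith

lemma antitone_norm_sub (hx : IsSweepingSolution C x) (hy : IsSweepingSolution C y) :
    Antitone fun t => ‖x t - y t‖ := by
  obtain ⟨Kx, hKx⟩ := hx.1
  obtain ⟨Ky, hKy⟩ := hy.1
  have hsq : Antitone fun t => ‖x t - y t‖ ^ 2 :=
    LocallyLipschitz.antitone_of_ae_deriv_nonpos
      ((contDiff_norm_sq ℝ).locallyLipschitz.comp (hKx.sub hKy).locallyLipschitz)
      (ae_deriv_norm_sub_sq_nonpos hx hy)
  exact fun s t hst => (pow_le_pow_iff_left₀ (norm_nonneg _) (norm_nonneg _) two_ne_zero).1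
    (hsq hst)

end IsSweepingSolution

theorem stmt_1_general {E : Type*} [NormedAddCommGroup E] [InnerProductSpace ℝ E]
    (T : ℝ) (hT : 0 < T) (C : ℝ → Set E)
    (x y : ℝ → E) (hx : IsSweepingSolution C x) (hy : IsSweepingSolution C y)
    (hxT : ∀ t, x (t + T) = x t) (hyT : ∀ t, y (t + T) = y t) :
    ∀ s t : ℝ, ‖x s - y s‖ = ‖x t - y t‖ :=
  Function.Periodic.eq_of_antitone (fun t => by simp only [hxT, hyT]) hT
    (hx.antitone_norm_sub hy)

theorem stmt_1 {E : Type*} [NormedAddCommGroup E] [InnerProductSpace ℝ E]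
    [FiniteDimensional ℝ E]
    (T : ℝ) (hT : 0 < T) (C : ℝ → Set E)
    (hne : ∀ t, (C t).Nonempty) (hcl : ∀ t, IsClosed (C t)) (hcv : ∀ t, Convex ℝ (C t))
    (L : ℝ) (hL : 0 ≤ L)
    (hLip : ∀ s t : ℝ, Metric.hausdorffDist (C s) (C t) ≤ L * |s - t|)
    (x y : ℝ → E) (hx : IsSweepingSolution C x) (hy : IsSweepingSolution C y)
    (hxT : ∀ t, x (t + T) = x t) (hyT : ∀ t, y (t + T) = y t) :
    ∀ s t : ℝ, ‖x s - y s‖ = ‖x t - y t‖ :=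
  stmt_1_general T hT C x y hx hy hxT hyT
end

section
/- Let ū ∈ ℝᵐ with ū_i ≠ 0 for all i and a_i > 0, and let ξ¹,...,ξᵐ ∈ ℝᵐ be points such that for each j: ⟨ū, Aξ^j⟩ = 0 and a_i ξ_i^j = b_i for all i ≠ j (A = diag(a_i)), and suppose the ξ^j are pairwise distinct. Then for any fixed j, the m − 1 vectors ζ^{ij} = ξ^i − ξ^j (i ≠ j) are linearly independent; hence ξ¹,...,ξᵐ are the vertices of an (m−1)-simplex in the hyperplane V = {x : ⟨ū, Ax⟩ = 0}. -/
/-!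
For fixed `j`, the vector `ξ i - ξ j` vanishes off the coordinates `i` and `j`, because the
constraint `a k ξ_k = b_k` pins the `k`-th coordinate of every point other than `ξ k`. Its `i`-th
coordinate cannot vanish: otherwise `ξ i` and `ξ j` would differ only in coordinate `j`, and lying
on the same hyperplane `⟨ū, A x⟩ = 0`, whose normal has nonzero `j`-th entry `ū_j a_j`, they would
coincide. So, restricted to the coordinates `i ≠ j`, these vectors form a diagonal family with
nonzero diagonal, hence are linearly independent, which is affine independence of the `ξ i`.
-/

open Matrix

theorem linearIndependent_of_apply_eq_zero_of_ne {ι κ K : Type*} [Field K]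
    {v : ι → κ → K} {f : ι → κ} (hzero : ∀ i k, k ≠ i → v k (f i) = 0)
    (hdiag : ∀ i, v i (f i) ≠ 0) :
    LinearIndependent K v := by
  rw [linearIndependent_iff']
  intro s g hg i hi
  have hsum : ∑ k ∈ s, g k * v k (f i) = g i * v i (f i) :=
    Finset.sum_eq_single_of_mem i hi fun k _ hki => by rw [hzero i k hki, mul_zero]
  have hcoord := congrFun hg (f i)
  simp only [Finset.sum_apply, Pi.smul_apply, smul_eq_mul, Pi.zero_apply, hsum] at hcoord
  exact (mul_eq_zero.mp hcoord).resolve_right (hdiag i)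

theorem eq_of_dotProduct_eq_of_forall_ne {ι K : Type*} [Fintype ι] [Field K]
    {w x y : ι → K} {j : ι} (hw : w j ≠ 0) (h : w ⬝ᵥ x = w ⬝ᵥ y)
    (hxy : ∀ k, k ≠ j → x k = y k) : x = y := by
  have hsum : w ⬝ᵥ (x - y) = w j * (x j - y j) :=
    Finset.sum_eq_single_of_mem j (Finset.mem_univ j) fun k _ hkj => by
      rw [Pi.sub_apply, hxy k hkj, sub_self, mul_zero]
  have hj : x j = y j := by
    rw [dotProduct_sub, h, sub_self, eq_comm] at hsum
    exact sub_eq_zero.mp ((mul_eq_zero.mp hsum).resolve_left hw)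
  funext k
  by_cases hkj : k = j
  · exact hkj ▸ hj
  · exact hxy k hkj

theorem stmt_19 {m : ℕ} (u : Fin m → ℝ) (hu : ∀ i, u i ≠ 0)
    (a : Fin m → ℝ) (ha : ∀ i, 0 < a i) (b : Fin m → ℝ)
    (ξ : Fin m → (Fin m → ℝ))
    (hplane : ∀ j, u ⬝ᵥ (Matrix.diagonal a).mulVec (ξ j) = 0)
    (hcoord : ∀ j, ∀ i, i ≠ j → a i * ξ j i = b i)
    (hdist : Function.Injective ξ) :
    (∀ j : Fin m, LinearIndependent ℝ (fun i : {i : Fin m // i ≠ j} => ξ i - ξ j)) ∧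
      AffineIndependent ℝ ξ := by
  have hagree : ∀ i j k, k ≠ i → k ≠ j → ξ i k = ξ j k := fun i j k hki hkj =>
    mul_left_cancel₀ (ha k).ne' ((hcoord i k hki).trans (hcoord j k hkj).symm)
  have hnormal : ∀ j, (u ᵥ* diagonal a) ⬝ᵥ ξ j = 0 := fun j => by
    rw [← dotProduct_mulVec, hplane j]
  have hdiag : ∀ i j, i ≠ j → ξ i i - ξ j i ≠ 0 := by
    intro i j hij hii
    have hnormal_j : (u ᵥ* diagonal a) j ≠ 0 := by
      rw [vecMul_diagonal]
      exact mul_ne_zero (hu j) (ha j).ne'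
    refine hij (hdist (eq_of_dotProduct_eq_of_forall_ne hnormal_j
      ((hnormal i).trans (hnormal j).symm) fun k hkj => ?_))
    rcases eq_or_ne k i with rfl | hki
    · exact sub_eq_zero.mp hii
    · exact hagree i j k hki hkj
  have hindep : ∀ j : Fin m, LinearIndependent ℝ (fun i : {i : Fin m // i ≠ j} => ξ i - ξ j) :=
    fun j => linearIndependent_of_apply_eq_zero_of_ne (f := Subtype.val)
      (fun i k hki => sub_eq_zero.mpr (hagree k j i (Subtype.coe_ne_coe.mpr hki.symm) i.2))
      (fun i => hdiag i j i.2)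
  refine ⟨hindep, ?_⟩
  rcases isEmpty_or_nonempty (Fin m) with _ | ⟨⟨j⟩⟩
  · exact affineIndependent_of_subsingleton ℝ ξ
  · exact (affineIndependent_iff_linearIndependent_vsub ℝ ξ j).mpr (hindep j)
end
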